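/- arXiv:2203.10503 — 5 statements merged into one kernel-verified Lean document; each statement's English description precedes it below -/
import Mathlib

section
/- For every natural number n, n·2^n = Σ_{k=0}^{n} (n-2k)^2 · C(n,k). -/
open Finset

/-- Pascal's rule splits the sum at rank `n + 1` into two sums at rank `n`, whose terms pair up
as `(m + 1)² + (m - 1)² = 2 m² + 2` with `m = n - 2k`. -/
theorem sum_range_sq_sub_two_mul_mul_choose_succ {R : Type*} [CommRing R] (n : ℕ) :
    ∑ k ∈ range (n + 1 + 1), (((n + 1 : ℕ) : R) - 2 * k) ^ 2 * ((n + 1).choose k : R) =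
      2 * ∑ k ∈ range (n + 1), ((n : R) - 2 * k) ^ 2 * (n.choose k : R) + 2 ^ (n + 1) := by
  have pascal := sum_choose_succ_mul (R := R) (fun k _ ↦ (((n + 1 : ℕ) : R) - 2 * k) ^ 2) n
  have binomial : ∑ k ∈ range (n + 1), (n.choose k : R) = 2 ^ n := by
    rw [← Nat.cast_sum, Nat.sum_range_choose, Nat.cast_pow, Nat.cast_ofNat]
  simp only [mul_comm _ ((Nat.choose _ _ : ℕ) : R)] at pascal ⊢
  rw [pascal, ← sum_add_distrib, pow_succ', ← binomial, mul_sum, mul_sum, ← sum_add_distrib]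
  refine sum_congr rfl fun k _ ↦ ?_
  push_cast
  ring

theorem sum_range_sq_sub_two_mul_mul_choose {R : Type*} [CommRing R] (n : ℕ) :
    ∑ k ∈ range (n + 1), ((n : R) - 2 * k) ^ 2 * (n.choose k : R) = (n : R) * 2 ^ n := by
  induction n with
  | zero => simp
  | succ n ih =>
    rw [sum_range_sq_sub_two_mul_mul_choose_succ, ih]
    push_cast
    ring

theorem stmt_0 (n : ℕ) :
    (n : ℤ) * 2 ^ n =
      ∑ k ∈ Finset.range (n + 1), ((n : ℤ) - 2 * k) ^ 2 * (n.choose k : ℤ) :=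
  (sum_range_sq_sub_two_mul_mul_choose n).symm
end

section
/- For every natural number n ≥ 1, (n+1)^(n-1) = Σ_{j=1}^{n} C(n-1, n-j) · (n-j+1)^(n-j) · j^(j-2), where the term j^(j-2) for j = 1 is interpreted as 1. -/
/-!
Setting `m = n - 1`, the claim is Abel's identity
`∑ k ≤ m, C(m, k) (k + 1)^(k - 1) (X - k)^(m - k) = (X + 1)^m` evaluated at `X = m + 1`.
The identity is proved by induction on `m`: the derivative of the left side for `m + 1` is
`m + 1` times the left side for `m`, so both sides differ by a constant, and that constant is
zero because at `X = -1` the left side is an `(m + 1)`-st forward difference of `x ↦ x ^ m`.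
-/

open Polynomial Finset

theorem sum_alternating_choose_mul_add_pow_eq_zero {R : Type*} [CommRing R] {m n : ℕ}
    (h : m < n) (a : R) :
    ∑ k ∈ range (n + 1), (-1) ^ (n - k) * (n.choose k : R) * (a + k) ^ m = 0 := by
  have := congr_fun (fwdDiff_iter_pow_eq_zero_of_lt (R := R) h) a
  rw [fwdDiff_iter_eq_sum_shift] at this
  simpa [zsmul_eq_mul] using this

/-- The coefficient `(k + 1) ^ (k - 1)` is `1` at `k = 0`, as `1⁻¹` would be. -/
noncomputable def abelPoly (R : Type*) [CommRing R] (m : ℕ) : R[X] :=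
  ∑ k ∈ range (m + 1), C ((m.choose k * (k + 1) ^ (k - 1) : ℕ) : R) * (X - C (k : R)) ^ (m - k)

section

variable {R : Type*} [CommRing R]

theorem derivative_abelPoly_succ (m : ℕ) :
    derivative (abelPoly R (m + 1)) = C ((m + 1 : ℕ) : R) * abelPoly R m := by
  rw [abelPoly, abelPoly, sum_range_succ, Nat.sub_self, pow_zero, mul_one, derivative_add,
    derivative_C, add_zero, derivative_sum, mul_sum]
  refine sum_congr rfl fun k hk => ?_
  have hkm : k ≤ m := Nat.lt_succ_iff.mp (mem_range.mp hk)
  have hcoeff : (m + 1).choose k * (k + 1) ^ (k - 1) * (m + 1 - k) =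
      (m + 1) * (m.choose k * (k + 1) ^ (k - 1)) := by
    rw [mul_right_comm, ← Nat.choose_mul_succ_eq]; ring
  rw [derivative_C_mul, derivative_X_sub_C_pow, ← mul_assoc, ← C_mul, ← Nat.cast_mul, hcoeff,
    Nat.cast_mul, C_mul, mul_assoc, show m + 1 - k - 1 = m - k by omega]

theorem abelPoly_succ_eval_neg_one (m : ℕ) : (abelPoly R (m + 1)).eval (-1) = 0 := by
  rw [abelPoly, eval_finsetSum, ← sum_alternating_choose_mul_add_pow_eq_zero
    (Nat.lt_succ_self m) (1 : R)]
  refine sum_congr rfl fun k hk => ?_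
  have hkm : k ≤ m + 1 := Nat.lt_succ_iff.mp (mem_range.mp hk)
  have hpow : ((k : R) + 1) ^ (k - 1) * ((k : R) + 1) ^ (m + 1 - k) = ((k : R) + 1) ^ m := by
    rcases Nat.eq_zero_or_pos k with rfl | hk0
    · simp
    · rw [← pow_add]; congr 1; omega
  simp only [eval_mul, eval_C, eval_pow, eval_sub, eval_X, Nat.cast_mul, Nat.cast_pow,
    Nat.cast_add, Nat.cast_one, show (-1 : R) - k = -1 * (k + 1) by ring, mul_pow]
  rw [add_comm (1 : R), ← hpow]
  ring

theorem abelPoly_eq [IsAddTorsionFree R] (m : ℕ) : abelPoly R m = (X + C 1) ^ m := by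
  induction m with
  | zero => simp [abelPoly]
  | succ m ih =>
    have hD : derivative (abelPoly R (m + 1) - (X + C 1) ^ (m + 1)) = 0 := by
      rw [derivative_sub, derivative_abelPoly_succ, ih, derivative_X_add_C_pow,
        Nat.add_sub_cancel, sub_self]
    have hconst := eq_C_of_derivative_eq_zero hD
    have hzero : (abelPoly R (m + 1) - (X + C 1) ^ (m + 1)).coeff 0 = 0 := by
      simpa [abelPoly_succ_eval_neg_one] using (congrArg (eval (-1)) hconst).symm
    rw [← sub_eq_zero, hconst, hzero, C_0]

end

theorem add_two_pow_eq_sum_choose_mul_pow (m : ℕ) :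
    (m + 2) ^ m =
      ∑ k ∈ range (m + 1), m.choose k * (k + 1) ^ (k - 1) * (m + 1 - k) ^ (m - k) := by
  apply Nat.cast_injective (R := ℤ)
  have h := congrArg (eval ((m : ℤ) + 1)) (abelPoly_eq (R := ℤ) m)
  rw [abelPoly, eval_finsetSum, eval_pow, eval_add, eval_X, eval_C] at h
  push_cast
  rw [show (m : ℤ) + 2 = m + 1 + 1 by ring, ← h]
  refine sum_congr rfl fun k hk => ?_
  rw [Nat.cast_sub (Nat.le_succ_of_le (Nat.lt_succ_iff.mp (mem_range.mp hk)))]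
  simp [add_sub_right_comm]

theorem stmt_2 (n : ℕ) (hn : 1 ≤ n) :
    (n + 1) ^ (n - 1) =
      ∑ j ∈ Finset.Icc 1 n,
        (n - 1).choose (n - j) * (n - j + 1) ^ (n - j) * j ^ (j - 2) := by
  obtain ⟨m, rfl⟩ : ∃ m, n = m + 1 := ⟨n - 1, by omega⟩
  rw [Nat.add_sub_cancel, add_assoc, one_add_one_eq_two, add_two_pow_eq_sum_choose_mul_pow,
    ← zero_add 1, ← map_add_right_Icc, zero_add, sum_map, ← Nat.range_succ_eq_Icc_zero]
  refine sum_congr rfl fun k hk => ?_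
  have hkm : k ≤ m := Nat.lt_succ_iff.mp (mem_range.mp hk)
  rw [addRightEmbedding_apply, show m + 1 - (k + 1) = m - k by omega,
    show k + 1 - 2 = k - 1 by omega, show m - k + 1 = m + 1 - k by omega, Nat.choose_symm hkm]
  ring
end

section
/- Let d be a positive rational, N₁, N₂ rationals, b = 4N₂/d, and define A(n) = (1/4)·N₁·b^n·(n + 1/2)^(n-2) and B(n) = N₂·b^n·(n+1)^(n-2) (rational zpow for small n). Then for every n ≥ 1, with m = 2n+1: m·d·A(n) = 2·Σ_{j=1}^{n} C(n-1, n-j)·j·(m-2j)^2·A(n-j)·B(j-1). -/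
/-!
The recursion is Abel's identity `∑ C(m,i) x (x+i)^(i-1) (y+m-i)^(m-i) = (x+y+m)^m` at `x = 1`,
`y = 1/2`, `m = n - 1`: writing the summation index as `j = i + 1` and `k = n - j = m - i`,
the factors combine as `(i+1)·(i+1)^(i-2) = (i+1)^(i-1)` and
`(2k+1)²/4·(k+1/2)^(k-2) = (k+1/2)^k`,
while `d·b = 4N₂` turns the left side into `2N₁N₂b^m(m+3/2)^m`.
Abel's identity is proved by induction on `m` together with its binomial-type companion
`∑ C(m,i) x(x+i)^(i-1) y(y+m-i)^(m-i-1) = (x+y)(x+y+m)^(m-1)`: each step splits `C(m+1,i)` by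
Pascal's rule and recognises the shifted instances `(x, y+1)` and `(y, x+1)` of the previous one.
-/

open Finset

namespace Abel

variable {R : Type*} [CommRing R]

/-- `abelPoly x k = x (x + k)^(k-1)`, with the value `1` at `k = 0` that the formula has for
`x ≠ 0`. -/
def abelPoly (x : R) : ℕ → R
  | 0 => 1
  | k + 1 => x * (x + (k + 1)) ^ k

@[simp] theorem abelPoly_zero (x : R) : abelPoly x 0 = 1 := rfl

theorem abelPoly_succ (x : R) (k : ℕ) : abelPoly x (k + 1) = x * (x + 1 + k) ^ k := by
  simp only [abelPoly, add_assoc, add_comm (1 : R)]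

theorem add_pow_self_eq_abelPoly_add (y : R) (j : ℕ) :
    (y + j) ^ j = abelPoly y j + j * (y + j) ^ (j - 1) := by
  cases j with
  | zero => simp
  | succ k =>
    simp only [abelPoly_succ, Nat.add_sub_cancel, pow_succ]
    push_cast
    ring

theorem abelPoly_one_mul (i : ℕ) : abelPoly (1 : R) i * (1 + i) = (1 + i) ^ i := by
  cases i with
  | zero => simp
  | succ k =>
    rw [abelPoly_succ, pow_succ]
    push_cast
    ring

theorem sum_antidiagonal_choose_mul_abelPoly_mul_abelPoly_succ (n : ℕ)
    (hF : ∀ x y : R, ∑ ij ∈ antidiagonal n,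
      (n.choose ij.1 : R) * abelPoly x ij.1 * (y + ij.2) ^ ij.2 = (x + y + n) ^ n)
    (x y : R) :
    ∑ ij ∈ antidiagonal (n + 1), ((n + 1).choose ij.1 : R) * abelPoly x ij.1 * abelPoly y ij.2 =
      abelPoly (x + y) (n + 1) := by
  simp only [mul_assoc]
  rw [sum_antidiagonal_choose_succ_mul (fun i j => abelPoly x i * abelPoly y j)]
  have hy : ∑ ij ∈ antidiagonal n,
      (n.choose ij.1 : R) * (abelPoly x ij.1 * abelPoly y (ij.2 + 1)) =
        y * (x + y + 1 + n) ^ n := by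
    rw [show x + y + 1 + (n : R) = x + (y + 1) + n by ring, ← hF x (y + 1), mul_sum]
    refine sum_congr rfl fun ij _ => ?_
    rw [abelPoly_succ]
    ring
  have hx : ∑ ij ∈ antidiagonal n,
      (n.choose ij.2 : R) * (abelPoly x (ij.1 + 1) * abelPoly y ij.2) =
        x * (x + y + 1 + n) ^ n := by
    rw [show x + y + 1 + (n : R) = y + (x + 1) + n by ring, ← hF y (x + 1), mul_sum,
      ← Nat.sum_antidiagonal_swap]
    refine sum_congr rfl fun ij _ => ?_
    rw [abelPoly_succ]
    simp only [Prod.fst_swap, Prod.snd_swap]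
    ring
  rw [hy, hx, abelPoly_succ]
  ring

theorem sum_antidiagonal_choose_mul_abelPoly_mul_pow (x y : R) (n : ℕ) :
    ∑ ij ∈ antidiagonal n, (n.choose ij.1 : R) * abelPoly x ij.1 * (y + ij.2) ^ ij.2 =
      (x + y + n) ^ n := by
  induction n generalizing x y with
  | zero => simp
  | succ n ih =>
    have hS := sum_antidiagonal_choose_mul_abelPoly_mul_abelPoly_succ n ih x y
    have hshift : ∑ ij ∈ antidiagonal (n + 1),
        ((n + 1).choose ij.1 : R) * abelPoly x ij.1 * (ij.2 * (y + ij.2) ^ (ij.2 - 1)) =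
        (n + 1) * (x + y + 1 + n) ^ n := by
      rw [Nat.sum_antidiagonal_succ', show x + y + 1 + (n : R) = x + (y + 1) + n by ring,
        ← ih x (y + 1), mul_sum]
      simp only [Nat.cast_zero, zero_mul, mul_zero, zero_add]
      refine sum_congr rfl fun ⟨i, j⟩ hij => ?_
      obtain rfl : i + j = n := mem_antidiagonal.mp hij
      have hchoose :
          ((i + j + 1).choose i : R) * (j + 1 : ℕ) = (i + j + 1 : ℕ) * (i + j).choose i := by
        have h := Nat.choose_mul_succ_eq (i + j) i
        rw [show i + j + 1 - i = j + 1 by omega] at h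
        exact_mod_cast by rw [← h, mul_comm]
      simp only [Nat.add_sub_cancel]
      push_cast at hchoose ⊢
      linear_combination (abelPoly x i * (y + 1 + j) ^ j) * hchoose
    simp only [add_pow_self_eq_abelPoly_add y, mul_add, sum_add_distrib, hS, hshift, abelPoly_succ]
    push_cast
    ring

end Abel

open Abel

theorem sum_Icc_one_eq_sum_antidiagonal {M : Type*} [AddCommMonoid M] (f : ℕ → M) (m : ℕ) :
    ∑ k ∈ Icc 1 (m + 1), f k = ∑ ij ∈ antidiagonal m, f (ij.1 + 1) := by
  rw [Nat.sum_antidiagonal_eq_sum_range_succ_mk, range_eq_Ico, sum_Ico_add' f,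
    Ico_add_one_right_eq_Icc]

/-- The explicit formulas `A n = (1/4)·N₁·b^n·(n+1/2)^(n-2)` and
`B n = N₂·b^n·(n+1)^(n-2)` solve the odd-index recursion with `m = 2n+1`. -/
theorem stmt_5 (d N₁ N₂ b : ℚ) (hd : 0 < d) (hb : b = 4 * N₂ / d)
    (A B : ℕ → ℚ)
    (hA : ∀ k : ℕ, A k = (1 / 4) * N₁ * b ^ k * ((k : ℚ) + 1 / 2) ^ ((k : ℤ) - 2))
    (hB : ∀ k : ℕ, B k = N₂ * b ^ k * ((k : ℚ) + 1) ^ ((k : ℤ) - 2))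
    (n : ℕ) (hn : 1 ≤ n) :
    (2 * (n : ℚ) + 1) * d * A n =
      2 * ∑ j ∈ Finset.Icc 1 n,
        ((n - 1).choose (n - j) : ℚ) * (j : ℚ) * (2 * (n : ℚ) + 1 - 2 * (j : ℚ)) ^ 2 *
          A (n - j) * B (j - 1) := by
  obtain ⟨m, rfl⟩ : ∃ m, n = m + 1 := ⟨n - 1, by omega⟩
  have hdb : d * b = 4 * N₂ := by rw [hb]; field_simp
  have hterm : ∀ ij ∈ antidiagonal m,
      ((m + 1 - 1).choose (m + 1 - (ij.1 + 1)) : ℚ) * ((ij.1 + 1 : ℕ) : ℚ) *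
        (2 * ((m + 1 : ℕ) : ℚ) + 1 - 2 * ((ij.1 + 1 : ℕ) : ℚ)) ^ 2 *
        A (m + 1 - (ij.1 + 1)) * B (ij.1 + 1 - 1) =
      N₁ * N₂ * b ^ m * ((m.choose ij.1 : ℚ) * abelPoly 1 ij.1 * (1 / 2 + ij.2) ^ ij.2) := by
    rintro ⟨i, j⟩ hij
    obtain rfl : i + j = m := mem_antidiagonal.mp hij
    have hi : (i : ℚ) + 1 ≠ 0 := by positivity
    have hj : (j : ℚ) + 1 / 2 ≠ 0 := by positivity
    rw [show i + j + 1 - (i + 1) = j by omega, Nat.add_sub_cancel, Nat.add_sub_cancel, hA, hB,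
      Nat.choose_symm_add, zpow_sub₀ hi, zpow_sub₀ hj, zpow_natCast, zpow_natCast,
      add_comm (i : ℚ), ← abelPoly_one_mul]
    field_simp
    push_cast
    ring
  rw [sum_Icc_one_eq_sum_antidiagonal, sum_congr rfl hterm, ← mul_sum,
    sum_antidiagonal_choose_mul_abelPoly_mul_pow, hA]
  push_cast
  rw [show (m : ℤ) + 1 - 2 = ((m + 1 : ℕ) : ℤ) - 2 by push_cast; ring,
    zpow_sub₀ (by positivity), zpow_natCast]
  field_simp
  linear_combination (N₁ * b ^ m * (3 / 2 + m) ^ m * (2 * m + 3)) * hdb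
end

section
/- For the tree function T(x) = Σ_{n≥1} n^{n-1} x^n / n! regarded as a formal power series over ℚ, the identity Σ_{n≥1} n^{n-2} x^{n-1}/n! = (1/x)(T(x) - T(x)²/2) holds; equivalently, x·Σ_{n≥1} n^{n-2} x^{n-1}/n! = T(x) - T(x)²/2 as formal power series. -/
/-!
Let `T = ∑ n^(n-1) xⁿ/n!` and `P = ∑ n^n xⁿ/n!`. Coefficientwise, `T * P = P - 1` is Abel's
identity `∑ₖ C(n+1,k+1) (k+1)^k (n-k)^(n-k) = (n+1)^(n+1)`. We prove it for the polynomial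
obtained by adding a shift `X + c` to each base `n - k`: differentiating in `X` reduces the
identity to the previous `n` with `c` raised by one, and at `X = -(c+n+2)` both sides vanish,
the left one as an `(n+2)`-nd finite difference of `x ↦ x^(n+1)`.

For the Euler operator `θ = X d/dX` we have `θ T = P - 1` and `θ (∑ n^(n-2) xⁿ/n!) = T`,
hence `θ (T - T²/2) = (1 - T) θ T = (1 - T) (P - 1) = T`. Since `θ` is injective on series
with a fixed constant term, the identity follows.
-/

open Finset PowerSeries
open scoped Nat

theorem sum_range_neg_one_pow_mul_choose_mul_add_pow {R : Type*} [CommRing R] {n j : ℕ}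
    (h : j < n) (y : R) :
    ∑ k ∈ range (n + 1), (-1) ^ (n - k) * (n.choose k : R) * (y + k) ^ j = 0 := by
  have := congr_fun (fwdDiff_iter_pow_eq_zero_of_lt (R := R) h) y
  rw [fwdDiff_iter_eq_sum_shift] at this
  simpa [zsmul_eq_mul] using this

namespace Polynomial

variable {R : Type*} [CommRing R]

noncomputable def abelSum (n : ℕ) (c : R) : R[X] :=
  ∑ k ∈ range (n + 1),
    C (((n + 1).choose (k + 1) : R) * (k + 1) ^ k) * (X + C (c + (n - k : ℕ))) ^ (n - k)

theorem derivative_abelSum_succ (n : ℕ) (c : R) :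
    derivative (abelSum (n + 1) c) = C ((n : R) + 2) * abelSum n (c + 1) := by
  rw [abelSum, derivative_sum, sum_range_succ, abelSum, mul_sum]
  simp only [derivative_C_mul, derivative_X_add_C_pow, Nat.sub_self, Nat.cast_zero, map_zero,
    zero_mul, mul_zero, add_zero]
  refine sum_congr rfl fun k hk => ?_
  have hk : k ≤ n := Nat.lt_succ_iff.mp (mem_range.mp hk)
  have hchoose := Nat.choose_mul_succ_eq (n + 1) (k + 1)
  rw [show n + 1 + 1 - (k + 1) = n - k + 1 by omega] at hchoose
  have hcoef : ((n + 1 + 1).choose (k + 1) * (k + 1) ^ k * (n - k + 1 : ℕ) : R) =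
      ((n : R) + 2) * ((n + 1).choose (k + 1) * (k + 1) ^ k) := by
    have := congr_arg (Nat.cast : ℕ → R) hchoose
    push_cast at this ⊢
    linear_combination (-((k : R) + 1) ^ k) * this
  have hbase : c + ((n - k + 1 : ℕ) : R) = c + 1 + (n - k : ℕ) := by push_cast; ring
  rw [show n + 1 - k = n - k + 1 by omega, Nat.add_sub_cancel, hbase, ← mul_assoc, ← C_mul,
    hcoef, C_mul, mul_assoc]

theorem eval_abelSum_succ (n : ℕ) (c : R) : (abelSum (n + 1) c).eval (-(c + n + 2)) = 0 := by
  have h :=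
    sum_range_neg_one_pow_mul_choose_mul_add_pow (n := n + 2) (j := n + 1) (by omega) (0 : R)
  simp only [sum_range_succ' _ (n + 2), Nat.cast_zero, add_zero, zero_add,
    zero_pow n.succ_ne_zero, mul_zero] at h
  rw [abelSum, eval_finsetSum, ← h]
  refine sum_congr rfl fun k hk => ?_
  have hk : k ≤ n + 1 := Nat.lt_succ_iff.mp (mem_range.mp hk)
  have hbase : -(c + n + 2) + (c + (n + 1 - k : ℕ)) = -((k : R) + 1) := by
    rw [Nat.cast_sub hk]; push_cast; ring
  simp only [eval_mul, eval_C, eval_pow, eval_add, eval_X, hbase]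
  have hpow : ((k : R) + 1) ^ (n + 1) = (k + 1) ^ k * (k + 1) ^ (n + 1 - k) := by
    rw [← pow_add, Nat.add_sub_cancel' hk]
  rw [neg_pow, show n + 2 - (k + 1) = n + 1 - k by omega, Nat.cast_succ, hpow]
  ring

theorem abelSum_eq [IsAddTorsionFree R] (n : ℕ) (c : R) :
    abelSum n c = C ((n : R) + 1) * (X + C (c + n + 1)) ^ n := by
  induction n generalizing c with
  | zero => simp [abelSum]
  | succ n ih =>
    set D := abelSum (n + 1) c - C ((↑(n + 1) : R) + 1) * (X + C (c + ↑(n + 1) + 1)) ^ (n + 1)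
    have hD : derivative D = 0 := by
      rw [derivative_sub, derivative_abelSum_succ, ih, derivative_C_mul, derivative_X_add_C_pow,
        show c + 1 + n + 1 = c + ↑(n + 1) + 1 by push_cast; ring, Nat.add_sub_cancel]
      push_cast
      rw [show (n : R) + 1 + 1 = n + 2 by ring, sub_self]
    have hroot : D.eval (-(c + n + 2)) = 0 := by
      rw [eval_sub, eval_abelSum_succ]
      simp only [eval_mul, eval_C, eval_pow, eval_add, eval_X]
      rw [show -(c + n + 2) + (c + ↑(n + 1) + 1) = 0 by push_cast; ring, zero_pow n.succ_ne_zero]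
      ring
    rw [eq_C_of_derivative_eq_zero hD, eval_C] at hroot
    have hD0 : D = 0 := by rw [eq_C_of_derivative_eq_zero hD, hroot, map_zero]
    exact sub_eq_zero.mp hD0

end Polynomial

theorem sum_choose_succ_mul_pow_mul_pow (n : ℕ) :
    ∑ k ∈ range (n + 1), (n + 1).choose (k + 1) * (k + 1) ^ k * (n - k) ^ (n - k) =
      (n + 1) ^ (n + 1) := by
  have h := congr_arg (Polynomial.eval 0) (Polynomial.abelSum_eq n (0 : ℤ))
  simp only [Polynomial.abelSum, Polynomial.eval_finsetSum, Polynomial.eval_mul, Polynomial.eval_C,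
    Polynomial.eval_pow, Polynomial.eval_add, Polynomial.eval_X, zero_add] at h
  rw [pow_succ']
  exact_mod_cast h

namespace PowerSeries

variable (R : Type*) [CommSemiring R]

noncomputable def eulerOp : Derivation R R⟦X⟧ R⟦X⟧ := (X : R⟦X⟧) • d⁄dX R

variable {R}

theorem coeff_eulerOp (f : R⟦X⟧) (n : ℕ) : coeff n (eulerOp R f) = n * coeff n f := by
  rcases n with _ | n
  · simp [eulerOp]
  · simp [eulerOp, coeff_succ_X_mul, coeff_derivative, mul_comm]

theorem eq_of_eulerOp_eq [IsAddTorsionFree R] {f g : R⟦X⟧}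
    (h₀ : constantCoeff f = constantCoeff g) (h : eulerOp R f = eulerOp R g) : f = g := by
  ext (_ | n)
  · simpa using h₀
  · have := congr_arg (coeff (n + 1)) h
    simp only [coeff_eulerOp, ← nsmul_eq_mul] at this
    exact IsAddTorsionFree.nsmul_right_injective n.succ_ne_zero this

theorem coeff_mk_div_factorial_mul {K : Type*} [Field K] [CharZero K] (a b : ℕ → K) (n : ℕ) :
    coeff n (mk (fun k => a k / k !) * mk (fun k => b k / k !)) =
      (∑ k ∈ range (n + 1), n.choose k * a k * b (n - k)) / n ! := by
  rw [coeff_mul, Nat.sum_antidiagonal_eq_sum_range_succ_mk, sum_div]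
  refine sum_congr rfl fun k hk => ?_
  have hk : k ≤ n := Nat.lt_succ_iff.mp (mem_range.mp hk)
  rw [coeff_mk, coeff_mk, Nat.cast_choose K hk]
  have : (n ! : K) ≠ 0 := mod_cast n.factorial_ne_zero
  field_simp

noncomputable def rootedTreeEGF : ℚ⟦X⟧ :=
  mk fun n => if n = 0 then 0 else (n : ℚ) ^ (n - 1) / n !

noncomputable def endofunctionEGF : ℚ⟦X⟧ := mk fun n => (n : ℚ) ^ n / n !

noncomputable def treeEGF : ℚ⟦X⟧ :=
  mk fun n => if n = 0 then 0 else (n : ℚ) ^ (n - 2) / n !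

theorem rootedTreeEGF_mul_endofunctionEGF :
    rootedTreeEGF * endofunctionEGF = endofunctionEGF - 1 := by
  have h : rootedTreeEGF = mk fun n => (if n = 0 then 0 else (n : ℚ) ^ (n - 1)) / n ! := by
    simp only [rootedTreeEGF, ite_div, zero_div]
  ext (_ | n)
  · simp [h, endofunctionEGF]
  · rw [h, endofunctionEGF, coeff_mk_div_factorial_mul, sum_range_succ', map_sub, coeff_mk,
      coeff_one]
    simp only [Nat.add_sub_add_right, Nat.succ_ne_zero, ↓reduceIte, add_tsub_cancel_right,
      mul_zero, zero_mul, add_zero, sub_zero]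
    congr 1
    exact_mod_cast sum_choose_succ_mul_pow_mul_pow n

theorem eulerOp_rootedTreeEGF : eulerOp ℚ rootedTreeEGF = endofunctionEGF - 1 := by
  ext (_ | n)
  · simp [coeff_eulerOp, endofunctionEGF]
  · simp only [rootedTreeEGF, endofunctionEGF, coeff_eulerOp, coeff_mk, map_sub, coeff_one,
      Nat.succ_ne_zero, ↓reduceIte, add_tsub_cancel_right, sub_zero, pow_succ, Nat.cast_succ]
    ring

theorem eulerOp_treeEGF : eulerOp ℚ treeEGF = rootedTreeEGF := by
  ext (_ | _ | n)
  · simp [coeff_eulerOp, treeEGF, rootedTreeEGF]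
  · simp [coeff_eulerOp, treeEGF, rootedTreeEGF]
  · simp only [treeEGF, rootedTreeEGF, coeff_eulerOp, coeff_mk, Nat.succ_ne_zero, ↓reduceIte,
      add_tsub_cancel_right, show n + 1 + 1 - 2 = n by omega, pow_succ, Nat.cast_succ]
    ring

end PowerSeries

/-- The forest-counting identity: `Σ_{n≥1} n^{n-2} x^n / n! = T(x) - T(x)²/2`,
where `T(x) = Σ_{n≥1} n^{n-1} x^n / n!` is the tree function, as formal power
series over `ℚ`. -/
theorem stmt_9
    (T : PowerSeries ℚ)
    (hT : T = PowerSeries.mk fun n => if n = 0 then 0 else (n : ℚ) ^ (n - 1) / n.factorial) :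
    (PowerSeries.mk fun n => if n = 0 then 0 else (n : ℚ) ^ (n - 2) / n.factorial) =
      T - T ^ 2 * PowerSeries.C (1 / 2 : ℚ) := by
  subst hT
  change treeEGF = rootedTreeEGF - rootedTreeEGF ^ 2 * C (1 / 2)
  refine eq_of_eulerOp_eq (by simp [treeEGF, rootedTreeEGF]) ?_
  rw [eulerOp_treeEGF, map_sub, mul_comm, ← smul_eq_C_mul, Derivation.map_smul,
    Derivation.leibniz_pow, eulerOp_rootedTreeEGF, ← Nat.cast_smul_eq_nsmul ℚ, smul_smul]
  norm_num only [one_smul, pow_one, smul_eq_mul]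
  linear_combination rootedTreeEGF_mul_endofunctionEGF
end

section
/- In the formal power series ring ℚ[[x]], let T = Σ_{n≥1} n^{n-1} x^n/n! (the tree function), which satisfies T = x·exp(T). Then exp(T/2) = Σ_{n≥0} (1/2)(n + 1/2)^{n-1} x^n/n! — equivalently, the power series U = (T/x)^{1/2} (defined as the unique power series with constant term 1 whose square is T/x) satisfies U = Σ_{n≥0} (1/2)(n+1/2)^{n-1} x^n/n!. -/
/-!
The Abel polynomials `A n = X (X + n)^(n-1)`, `A 0 = 1`, are of binomial type:
`A n (x + y) = ∑ k, (n choose k) A k (x) A (n-k) (y)`. Both sides, as polynomials in `x`, agree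
at `x = 0`, and `(A (n+1))' = (n + 1) A n (X + 1)` lets the derivative of the identity for `n + 1`
be read off the identity for `n`. Hence the exponential generating functions
`E a = ∑ A n (a) xⁿ/n!` satisfy `E (a + b) = E a * E b`. The series `S` is `E (1/2)` and
`X * E 1 = T`, so `X * S² = X * E 1 = T`.
-/

open Polynomial Finset

namespace Polynomial

variable {R : Type*} [CommRing R]

noncomputable def abel (k : ℕ) : R[X] :=
  if k = 0 then 1 else X * (X + C (k : R)) ^ (k - 1)

@[simp]
lemma abel_zero : (abel 0 : R[X]) = 1 := rfl

lemma abel_succ (k : ℕ) : (abel (k + 1) : R[X]) = X * (X + C ((k : R) + 1)) ^ k := by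
  simp [abel]

lemma eval_abel_succ (k : ℕ) (a : R) : (abel (k + 1)).eval a = a * (a + k + 1) ^ k := by
  simp [abel_succ, add_assoc]

lemma derivative_abel_succ (k : ℕ) :
    derivative (abel (k + 1) : R[X]) = ((k : R) + 1) • (abel k).comp (X + 1) := by
  cases k with
  | zero => simp [abel_succ]
  | succ j =>
    simp only [abel_succ, derivative_mul, derivative_pow, derivative_add, derivative_X,
      derivative_C, derivative_one, mul_comp, X_comp, pow_comp, add_comp, C_comp, one_comp,
      smul_eq_C_mul, Nat.cast_add, Nat.cast_one, C_add, C_1, Nat.add_sub_cancel]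
    ring

lemma eq_of_derivative_eq [IsAddTorsionFree R] {p q : R[X]}
    (h : derivative p = derivative q) (h0 : p.eval 0 = q.eval 0) : p = q := by
  have hpq := eq_C_of_derivative_eq_zero (p := p - q) (by rw [derivative_sub, h, sub_self])
  rw [coeff_zero_eq_eval_zero, eval_sub, h0, sub_self, map_zero] at hpq
  exact sub_eq_zero.mp hpq

lemma abel_comp_X_add_C [IsAddTorsionFree R] (m : ℕ) (y : R) :
    (abel m).comp (X + C y) =
      ∑ k ∈ range (m + 1), ((m.choose k : R) * (abel (m - k)).eval y) • abel k := by
  induction m with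
  | zero => simp
  | succ m ih =>
    refine eq_of_derivative_eq ?_ ?_
    · have hterm (k : ℕ) : (((m + 1).choose (k + 1) : R) * (abel (m - k)).eval y) •
          derivative (abel (k + 1) : R[X]) =
          ((m : R) + 1) • ((m.choose k * (abel (m - k)).eval y) • (abel k).comp (X + 1)) := by
        have hchoose : ((m + 1).choose (k + 1) : R) * (k + 1) = (m + 1) * m.choose k := by
          exact_mod_cast congrArg (Nat.cast : ℕ → R) (Nat.add_one_mul_choose_eq m k).symm
        rw [derivative_abel_succ, smul_smul, smul_smul]
        congr 1
        linear_combination (abel (m - k)).eval y * hchoose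
      rw [derivative_comp, derivative_abel_succ, derivative_sum, sum_range_succ']
      simp only [derivative_smul, abel_zero, derivative_one, smul_zero, add_zero,
        Nat.add_sub_add_right, hterm, ← smul_sum]
      have hsum_comp : ∑ k ∈ range (m + 1), ((m.choose k : R) * (abel (m - k)).eval y) •
          (abel k).comp (X + 1) = ((abel m).comp (X + C y)).comp (X + 1) := by
        simp only [ih, sum_comp, smul_comp]
      rw [hsum_comp, smul_comp, comp_assoc, comp_assoc]
      simp only [derivative_add, derivative_X, derivative_C, add_zero, one_mul, add_comp, X_comp,
        one_comp, C_comp]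
      rw [add_right_comm]
    · simp [eval_finsetSum, sum_range_succ', eval_abel_succ]

lemma eval_add_abel [IsAddTorsionFree R] (m : ℕ) (x y : R) :
    (abel m).eval (x + y) =
      ∑ k ∈ range (m + 1), m.choose k * (abel k).eval x * (abel (m - k)).eval y := by
  have h := congrArg (eval x) (abel_comp_X_add_C m y)
  simp only [eval_comp, eval_add, eval_X, eval_C, eval_finsetSum, eval_smul, smul_eq_mul] at h
  rw [h]
  exact sum_congr rfl fun k _ => by ring

lemma eval_abel_eq_mul_zpow {K : Type*} [Field K] {a : K} (ha : a ≠ 0) (n : ℕ) :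
    (abel n).eval a = a * (n + a) ^ ((n : ℤ) - 1) := by
  cases n with
  | zero => simp [ha]
  | succ k =>
    rw [eval_abel_succ, Nat.cast_succ, Nat.cast_succ, add_sub_cancel_right, zpow_natCast]
    ring

end Polynomial

namespace PowerSeries

variable {K : Type*} [Field K] [CharZero K]

noncomputable def abelEGF (a : K) : K⟦X⟧ :=
  mk fun n => (Polynomial.abel n).eval a / n.factorial

lemma constantCoeff_abelEGF (a : K) : constantCoeff (abelEGF a) = 1 := by
  simp [abelEGF]

lemma abelEGF_add (a b : K) : abelEGF (a + b) = abelEGF a * abelEGF b := by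
  ext n
  rw [coeff_mul, Nat.sum_antidiagonal_eq_sum_range_succ_mk]
  simp only [abelEGF, coeff_mk, Polynomial.eval_add_abel, sum_div]
  refine sum_congr rfl fun k hk => ?_
  have hkn : k ≤ n := Nat.lt_succ_iff.mp (mem_range.mp hk)
  have hn : (n.factorial : K) ≠ 0 := Nat.cast_ne_zero.mpr n.factorial_ne_zero
  rw [Nat.cast_choose K hkn]
  field_simp

lemma X_mul_abelEGF_one :
    X * abelEGF (1 : K) = mk fun n => if n = 0 then 0 else (n : K) ^ (n - 1) / n.factorial := by
  ext n
  rcases n with _ | _ | j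
  · simp
  · simp [abelEGF]
  · rw [coeff_succ_X_mul, abelEGF, coeff_mk, coeff_mk, Polynomial.eval_abel_succ,
      Nat.factorial_succ (j + 1)]
    have hj2 : (j : K) + 1 + 1 ≠ 0 := by exact_mod_cast (j + 1).succ_ne_zero
    push_cast
    rw [one_mul, add_comm 1 (j : K), pow_succ, mul_comm _ ((j : K) + 1 + 1),
      mul_div_mul_left _ _ hj2]

end PowerSeries

open PowerSeries

/-- Let `T` be the tree function and `S = Σ_{n≥0} (1/2)(n+1/2)^{n-1} x^n/n!`. Then `S`
is the unique power series with constant term `1` whose square is `T/x`, i.e.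
`S` has constant coefficient `1` and `x·S² = T`.  (Equivalently `S = exp(T/2)`.) -/
theorem stmt_17
    (T : PowerSeries ℚ)
    (hT : T = PowerSeries.mk fun n => if n = 0 then 0 else (n : ℚ) ^ (n - 1) / n.factorial)
    (S : PowerSeries ℚ)
    (hS : S = PowerSeries.mk fun n =>
      (1 / 2) * ((n : ℚ) + 1 / 2) ^ ((n : ℤ) - 1) / n.factorial) :
    PowerSeries.constantCoeff S = 1 ∧ PowerSeries.X * S ^ 2 = T := by
  have hS_abel : S = abelEGF (1 / 2) := by
    rw [hS, abelEGF]
    simp only [Polynomial.eval_abel_eq_mul_zpow (by norm_num : (1 / 2 : ℚ) ≠ 0)]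
  refine ⟨hS_abel ▸ constantCoeff_abelEGF _, ?_⟩
  rw [hT, hS_abel, sq, ← abelEGF_add, add_halves, X_mul_abelEGF_one]
end
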